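/- arXiv:2204.04571 — 4 statements merged into one kernel-verified Lean document; each statement's English description precedes it below -/
import Mathlib

section
/- For a bounded measurable domain Ω ⊂ ℝ^d (d = 2 or 3) and u, Δu ∈ L^∞(Ω; ℝ^d), the nonlocal operator D(𝓛)[u]Δu defined by (D(𝓛)[u]Δu)(x) = -∫_{H_ε(x)∩Ω} (J^ε(|y-x|)/(ε^{d+1} ω_d)) g''(√|y-x| S(y,x,u)) S(y,x,Δu) e_{y-x} dy satisfies ‖D(𝓛)[u]Δu‖_{L^∞} ≤ (C/ε²) ‖Δu‖_{L^∞}, where C depends only on ‖J‖_∞, g''(0), and d, and S(y,x,w) = ((w(y)-w(x))/|y-x|)·e_{y-x}, e_{y-x} = (y-x)/|y-x|. -/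
open MeasureTheory Metric Set
open scoped RealInnerProductSpace

/-- The unit vector `e_{y-x} = (y-x)/|y-x|`. -/
noncomputable def unitVec {d : ℕ} (y x : EuclideanSpace ℝ (Fin d)) :
    EuclideanSpace ℝ (Fin d) := ‖y - x‖⁻¹ • (y - x)

/-- The nonlocal strain `S(y,x,w) = ((w(y)-w(x))/|y-x|) ⬝ e_{y-x}`. -/
noncomputable def strain {d : ℕ} (y x : EuclideanSpace ℝ (Fin d))
    (w : EuclideanSpace ℝ (Fin d) → EuclideanSpace ℝ (Fin d)) : ℝ :=
  ‖y - x‖⁻¹ * ⟪w y - w x, unitVec y x⟫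

lemma ball_lintegral_inv_norm (d : ℕ) (hd2 : 2 ≤ d) {ε : ℝ} (hε : 0 < ε) :
    ∫⁻ y in Metric.ball (0 : EuclideanSpace ℝ (Fin d)) ε, ENNReal.ofReal ‖y‖⁻¹ ≤
      2 * ENNReal.ofReal (ε ^ (d - 1)) *
        volume (Metric.ball (0 : EuclideanSpace ℝ (Fin d)) 1) := by
  set E := EuclideanSpace ℝ (Fin d)
  haveI : Nontrivial E := by
    haveI : NeZero d := ⟨by omega⟩
    infer_instance
  have hfr : Module.finrank ℝ E = d := finrank_euclideanSpace_fin
  set ω := volume (Metric.ball (0 : E) 1) with hωdef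
  have hεinv : (0:ℝ) < ε⁻¹ := inv_pos.2 hε
  have hmeas : ∀ t : ℝ, MeasurableSet {a : E | t ≤ ‖a‖⁻¹} :=
    fun t => measurableSet_le measurable_const measurable_norm.inv
  have hpow : ε ^ d * ε⁻¹ = ε ^ (d - 1) := by
    have h1 : d - 1 + 1 = d := by omega
    rw [← h1, pow_succ, mul_assoc, mul_inv_cancel₀ hε.ne', mul_one, h1]
  rw [lintegral_eq_lintegral_meas_le _
      (Filter.Eventually.of_forall fun y => inv_nonneg.2 (norm_nonneg y))
      measurable_norm.inv.aemeasurable]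
  have hsplit : Ioi (0:ℝ) = Ioc 0 ε⁻¹ ∪ Ioi ε⁻¹ := (Ioc_union_Ioi_eq_Ioi hεinv.le).symm
  rw [hsplit, lintegral_union measurableSet_Ioi (Set.Ioc_disjoint_Ioi le_rfl)]
  have h1 : (∫⁻ t in Ioc (0:ℝ) ε⁻¹,
      (volume.restrict (Metric.ball (0:E) ε)) {a | t ≤ ‖a‖⁻¹})
      ≤ ENNReal.ofReal (ε ^ (d-1)) * ω := by
    calc ∫⁻ t in Ioc (0:ℝ) ε⁻¹, (volume.restrict (Metric.ball (0:E) ε)) {a | t ≤ ‖a‖⁻¹}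
        ≤ ∫⁻ _t in Ioc (0:ℝ) ε⁻¹, (ENNReal.ofReal (ε ^ d) * ω) := by
          refine lintegral_mono fun t => ?_
          calc (volume.restrict (Metric.ball (0:E) ε)) {a | t ≤ ‖a‖⁻¹}
              ≤ volume (Metric.ball (0:E) ε) := by
                rw [Measure.restrict_apply (hmeas t)]
                exact measure_mono inter_subset_right
            _ = ENNReal.ofReal (ε ^ d) * ω := by
                rw [Measure.addHaar_ball volume (0:E) hε.le, hfr]
      _ = ENNReal.ofReal (ε ^ d) * ω * ENNReal.ofReal ε⁻¹ := by
          rw [setLIntegral_const, Real.volume_Ioc, sub_zero]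
      _ = ENNReal.ofReal (ε ^ (d-1)) * ω := by
          rw [mul_right_comm, ← ENNReal.ofReal_mul (by positivity), hpow]
  have h2 : (∫⁻ t in Ioi ε⁻¹,
      (volume.restrict (Metric.ball (0:E) ε)) {a | t ≤ ‖a‖⁻¹})
      ≤ ENNReal.ofReal (ε ^ (d-1)) * ω := by
    have hd' : (-(d:ℝ)) < -1 := by
      have : (2:ℝ) ≤ d := by exact_mod_cast hd2
      linarith
    have hb : ∀ t ∈ Ioi ε⁻¹,
        (volume.restrict (Metric.ball (0:E) ε)) {a | t ≤ ‖a‖⁻¹}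
          ≤ ENNReal.ofReal (t ^ (-(d:ℝ))) * ω := by
      intro t ht
      have htpos : 0 < t := hεinv.trans ht
      rw [Measure.restrict_apply (hmeas t)]
      calc volume ({a : E | t ≤ ‖a‖⁻¹} ∩ Metric.ball (0:E) ε)
          ≤ volume (Metric.closedBall (0:E) t⁻¹) := by
            refine measure_mono ?_
            rintro a ⟨ha, -⟩
            simp only [Metric.mem_closedBall, dist_zero_right]
            calc ‖a‖ = (‖a‖⁻¹)⁻¹ := (inv_inv _).symm
              _ ≤ t⁻¹ := by
                  apply inv_anti₀ htpos ha
        _ = volume (Metric.ball (0:E) t⁻¹) :=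
            Measure.addHaar_closedBall_eq_addHaar_ball volume _ _
        _ = ENNReal.ofReal (t⁻¹ ^ d) * ω := by
            rw [Measure.addHaar_ball volume (0:E) (inv_nonneg.2 htpos.le), hfr]
        _ = ENNReal.ofReal (t ^ (-(d:ℝ))) * ω := by
            rw [Real.rpow_neg htpos.le, Real.rpow_natCast, inv_pow]
    calc (∫⁻ t in Ioi ε⁻¹, (volume.restrict (Metric.ball (0:E) ε)) {a | t ≤ ‖a‖⁻¹})
        ≤ ∫⁻ t in Ioi ε⁻¹, ENNReal.ofReal (t ^ (-(d:ℝ))) * ω :=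
          setLIntegral_mono' measurableSet_Ioi hb
      _ = (∫⁻ t in Ioi ε⁻¹, ENNReal.ofReal (t ^ (-(d:ℝ)))) * ω :=
          lintegral_mul_const' ω _ measure_ball_lt_top.ne
      _ = ENNReal.ofReal (∫ t in Ioi ε⁻¹, t ^ (-(d:ℝ))) * ω := by
          rw [ofReal_integral_eq_lintegral_ofReal
            (integrableOn_Ioi_rpow_of_lt hd' hεinv)
            ((ae_restrict_iff' measurableSet_Ioi).2 (Filter.Eventually.of_forall
              fun t ht => Real.rpow_nonneg (hεinv.trans ht).le _))]
      _ ≤ ENNReal.ofReal (ε ^ (d-1)) * ω := by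
          refine mul_le_mul_left (ENNReal.ofReal_le_ofReal ?_) ω
          rw [integral_Ioi_rpow_of_lt hd' hεinv]
          have hcast : ((d:ℝ) - 1) = ((d - 1 : ℕ) : ℝ) := by
            rw [Nat.cast_sub (by omega)]; simp
          have hval : (ε⁻¹) ^ (-(d:ℝ) + 1) = ε ^ (d - 1 : ℕ) := by
            rw [← Real.rpow_natCast ε (d-1), ← hcast,
              Real.inv_rpow hε.le, ← Real.rpow_neg hε.le]
            ring_nf
          rw [hval]
          have hd1 : (1:ℝ) ≤ (d:ℝ) - 1 := by
            have : (2:ℝ) ≤ d := by exact_mod_cast hd2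
            linarith
          have hrw : -ε ^ (d-1) / (-(d:ℝ) + 1) = ε ^ (d-1) / ((d:ℝ) - 1) := by
            rw [show (-(d:ℝ)+1) = -((d:ℝ)-1) by ring, div_neg, neg_div, neg_neg]
          rw [hrw]
          exact div_le_self (pow_nonneg hε.le _) hd1
  calc _ ≤ ENNReal.ofReal (ε ^ (d-1)) * ω + ENNReal.ofReal (ε ^ (d-1)) * ω := add_le_add h1 h2
    _ = 2 * ENNReal.ofReal (ε ^ (d-1)) * ω := by ring

theorem stmt_2 (d : ℕ) (hd : d = 2 ∨ d = 3)
    (J : ℝ → ℝ) (hJpos : ∀ r, 0 ≤ J r) (Jmax : ℝ) (hJb : ∀ r, J r ≤ Jmax)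
    (g : ℝ → ℝ) (hg : ContDiff ℝ 2 g)
    (hgb : ∀ r : ℝ, |deriv (deriv g) r| ≤ deriv (deriv g) 0) :
    -- the constant `C` depends only on `Jmax = ‖J‖_∞`, `g''(0)` and `d`
    ∃ C > 0, ∀ (ε : ℝ), 0 < ε →
      ∀ (Ω : Set (EuclideanSpace ℝ (Fin d))), MeasurableSet Ω → Bornology.IsBounded Ω →
      ∀ (u Δu : EuclideanSpace ℝ (Fin d) → EuclideanSpace ℝ (Fin d)) (M : ℝ),
        (∀ x ∈ Ω, ‖Δu x‖ ≤ M) →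
        ∀ x ∈ Ω,
          ‖∫ y in Metric.ball x ε ∩ Ω,
              (-(J (‖y - x‖ / ε) /
                  (ε ^ (d + 1) *
                    (volume (Metric.ball (0 : EuclideanSpace ℝ (Fin d)) 1)).toReal)) *
                (deriv (deriv g) (Real.sqrt ‖y - x‖ * strain y x u) * strain y x Δu)) •
              unitVec y x‖ ≤ C / ε ^ 2 * M := by
  have hd2 : 2 ≤ d := by rcases hd with h | h <;> omega
  set G0 := deriv (deriv g) 0 with hG0def
  have hG0 : 0 ≤ G0 := le_trans (abs_nonneg _) (hgb 0)
  have hJ0 : 0 ≤ Jmax := le_trans (hJpos 0) (hJb 0)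
  refine ⟨4 * Jmax * G0 + 1, by positivity, ?_⟩
  intro ε hε Ω hΩm hΩb u Δu M hM x hx
  have hE : True := trivial
  have hM0 : 0 ≤ M := le_trans (norm_nonneg _) (hM x hx)
  set ω := (volume (Metric.ball (0:EuclideanSpace ℝ (Fin d)) 1)).toReal with hωdef
  have hωe : volume (Metric.ball (0:EuclideanSpace ℝ (Fin d)) 1) = ENNReal.ofReal ω :=
    (ENNReal.ofReal_toReal measure_ball_lt_top.ne).symm
  have hω : 0 < ω :=
    ENNReal.toReal_pos (measure_ball_pos volume 0 one_pos).ne' measure_ball_lt_top.ne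
  set K := Jmax * G0 * (2 * M) / (ε ^ (d + 1) * ω) with hKdef
  have hK : 0 ≤ K := by positivity
  set F := fun y : EuclideanSpace ℝ (Fin d) =>
      (-(J (‖y - x‖ / ε) / (ε ^ (d + 1) * ω)) *
        (deriv (deriv g) (Real.sqrt ‖y - x‖ * strain y x u) * strain y x Δu)) •
        unitVec y x with hFdef
  have hunit : ∀ y : EuclideanSpace ℝ (Fin d), ‖unitVec y x‖ ≤ 1 := by
    intro y
    rw [unitVec, norm_smul, norm_inv, norm_norm]
    rcases eq_or_ne ‖y - x‖ 0 with h | h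
    · rw [h]; norm_num
    · rw [inv_mul_cancel₀ h]
  have hstrain : ∀ y ∈ Ω, |strain y x Δu| ≤ ‖y - x‖⁻¹ * (2 * M) := by
    intro y hy
    rw [strain, abs_mul, abs_inv, abs_norm]
    refine mul_le_mul_of_nonneg_left ?_ (inv_nonneg.2 (norm_nonneg _))
    calc |⟪Δu y - Δu x, unitVec y x⟫| ≤ ‖Δu y - Δu x‖ * ‖unitVec y x‖ :=
          abs_real_inner_le_norm _ _
      _ ≤ (‖Δu y‖ + ‖Δu x‖) * 1 :=
          mul_le_mul (norm_sub_le _ _) (hunit y) (norm_nonneg _) (by positivity)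
      _ ≤ 2 * M := by rw [mul_one]; linarith [hM y hy, hM x hx]
  have hpt : ∀ y ∈ Metric.ball x ε ∩ Ω, ‖F y‖ ≤ K * ‖y - x‖⁻¹ := by
    rintro y ⟨-, hy⟩
    rw [hFdef]
    simp only
    rw [norm_smul]
    have hsc : ‖(-(J (‖y - x‖ / ε) / (ε ^ (d + 1) * ω)) *
        (deriv (deriv g) (Real.sqrt ‖y - x‖ * strain y x u) * strain y x Δu))‖
        ≤ K * ‖y - x‖⁻¹ := by
      rw [Real.norm_eq_abs, neg_mul, abs_neg, abs_mul, abs_mul]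
      have h1 : |J (‖y - x‖ / ε) / (ε ^ (d + 1) * ω)| ≤ Jmax / (ε ^ (d + 1) * ω) := by
        rw [abs_div, abs_of_nonneg (hJpos _), abs_of_pos (by positivity)]
        exact div_le_div_of_nonneg_right (hJb _) (by positivity)
      have h2 : |deriv (deriv g) (Real.sqrt ‖y - x‖ * strain y x u)| ≤ G0 := hgb _
      calc |J (‖y - x‖ / ε) / (ε ^ (d + 1) * ω)| *
            (|deriv (deriv g) (Real.sqrt ‖y - x‖ * strain y x u)| * |strain y x Δu|)
          ≤ (Jmax / (ε ^ (d + 1) * ω)) * (G0 * (‖y - x‖⁻¹ * (2 * M))) := by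
            refine mul_le_mul h1 (mul_le_mul h2 (hstrain y hy) (abs_nonneg _) hG0)
              (by positivity) (by positivity)
        _ = K * ‖y - x‖⁻¹ := by rw [hKdef]; ring
    calc ‖(-(J (‖y - x‖ / ε) / (ε ^ (d + 1) * ω)) *
          (deriv (deriv g) (Real.sqrt ‖y - x‖ * strain y x u) * strain y x Δu))‖ *
          ‖unitVec y x‖ ≤ (K * ‖y - x‖⁻¹) * 1 :=
        mul_le_mul hsc (hunit y) (norm_nonneg _) (by positivity)
      _ = K * ‖y - x‖⁻¹ := mul_one _
  have hsm : MeasurableSet (Metric.ball x ε ∩ Ω) := measurableSet_ball.inter hΩm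
  have htrans : (∫⁻ y in Metric.ball x ε, ENNReal.ofReal ‖y - x‖⁻¹)
      = ∫⁻ z in Metric.ball (0:EuclideanSpace ℝ (Fin d)) ε, ENNReal.ofReal ‖z‖⁻¹ := by
    have hmp : MeasurePreserving (fun z : EuclideanSpace ℝ (Fin d) => z + x) volume volume :=
      measurePreserving_add_right volume x
    have hemb : MeasurableEmbedding (fun z : EuclideanSpace ℝ (Fin d) => z + x) :=
      (Homeomorph.addRight x).measurableEmbedding
    have hpre : (fun z : EuclideanSpace ℝ (Fin d) => z + x) ⁻¹' Metric.ball x ε = Metric.ball (0:EuclideanSpace ℝ (Fin d)) ε := by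
      ext z
      simp [Metric.mem_ball, dist_eq_norm]
    have := hmp.setLIntegral_comp_preimage_emb hemb
      (fun y => ENNReal.ofReal ‖y - x‖⁻¹) (Metric.ball x ε)
    rw [hpre] at this
    simp only [add_sub_cancel_right] at this
    exact this.symm
  have hlin : (∫⁻ y in Metric.ball x ε ∩ Ω, ENNReal.ofReal ‖F y‖)
      ≤ ENNReal.ofReal (K * (2 * ε ^ (d - 1) * ω)) := by
    calc (∫⁻ y in Metric.ball x ε ∩ Ω, ENNReal.ofReal ‖F y‖)
        ≤ ∫⁻ y in Metric.ball x ε ∩ Ω, ENNReal.ofReal K * ENNReal.ofReal ‖y - x‖⁻¹ := by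
          refine setLIntegral_mono' hsm fun y hy => ?_
          rw [← ENNReal.ofReal_mul hK]
          exact ENNReal.ofReal_le_ofReal (hpt y hy)
      _ ≤ ∫⁻ y in Metric.ball x ε, ENNReal.ofReal K * ENNReal.ofReal ‖y - x‖⁻¹ :=
          lintegral_mono' (Measure.restrict_mono Set.inter_subset_left le_rfl) le_rfl
      _ = ENNReal.ofReal K * ∫⁻ y in Metric.ball x ε, ENNReal.ofReal ‖y - x‖⁻¹ :=
          lintegral_const_mul' _ _ ENNReal.ofReal_ne_top
      _ = ENNReal.ofReal K * ∫⁻ z in Metric.ball (0:EuclideanSpace ℝ (Fin d)) ε, ENNReal.ofReal ‖z‖⁻¹ := by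
          rw [htrans]
      _ ≤ ENNReal.ofReal K *
          (2 * ENNReal.ofReal (ε ^ (d - 1)) * volume (Metric.ball (0:EuclideanSpace ℝ (Fin d)) 1)) :=
          mul_le_mul_right (ball_lintegral_inv_norm d hd2 hε) _
      _ = ENNReal.ofReal (K * (2 * ε ^ (d - 1) * ω)) := by
          have h2e : (2:ENNReal) = ENNReal.ofReal 2 := by norm_num
          rw [hωe, h2e, ← ENNReal.ofReal_mul (by norm_num),
            ← ENNReal.ofReal_mul (by positivity), ← ENNReal.ofReal_mul hK]
  have hfinal : K * (2 * ε ^ (d - 1) * ω) ≤ (4 * Jmax * G0 + 1) / ε ^ 2 * M := by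
    have hpow : ε ^ (d + 1) = ε ^ (d - 1) * ε ^ 2 := by
      rw [← pow_add]; congr 1; omega
    have ha : 0 < ε ^ (d - 1) := pow_pos hε _
    have heq : K * (2 * ε ^ (d - 1) * ω) = 4 * Jmax * G0 * M / ε ^ 2 := by
      rw [hKdef, hpow]
      field_simp
      ring
    rw [heq, div_mul_eq_mul_div, div_le_div_iff₀ (by positivity) (by positivity)]
    nlinarith [pow_pos hε 2, mul_nonneg (mul_nonneg hJ0 hG0) hM0]
  calc ‖∫ y in Metric.ball x ε ∩ Ω, F y‖
      ≤ (∫⁻ y in Metric.ball x ε ∩ Ω, ENNReal.ofReal ‖F y‖).toReal :=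
        norm_integral_le_lintegral_norm _
    _ ≤ (ENNReal.ofReal (K * (2 * ε ^ (d - 1) * ω))).toReal :=
        ENNReal.toReal_mono ENNReal.ofReal_ne_top hlin
    _ = K * (2 * ε ^ (d - 1) * ω) := ENNReal.toReal_ofReal (by positivity)
    _ ≤ (4 * Jmax * G0 + 1) / ε ^ 2 * M := hfinal
end

section
/- Under the hypotheses of the preceding fixed-point theorem, the solution depends continuously (in fact Lipschitz continuously) on the load: if L(u) = b and L(ũ) = b̃ with u, ũ ∈ B(u₀,R) and b, b̃ ∈ B(b₀, R/(2‖A⁻¹‖)), then ‖u - ũ‖ ≤ 2‖A⁻¹‖ ‖b - b̃‖. -/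
theorem stmt_6 {X : Type*} [NormedAddCommGroup X] [NormedSpace ℝ X] [CompleteSpace X]
    (u₀ : X) (R : ℝ) (hR : 0 < R) (L : X → X) (A : X ≃L[ℝ] X)
    (hA : HasFDerivAt L (A : X →L[ℝ] X) u₀)
    (M : ℝ) (hM : 0 < M)
    (hF : ∀ w w' : X, ‖w‖ ≤ R → ‖w'‖ ≤ R →
      ‖(L (u₀ + w) - L u₀ - A w) - (L (u₀ + w') - L u₀ - A w')‖ ≤ M * R * ‖w - w'‖)
    (hMR : M * ‖(A.symm : X →L[ℝ] X)‖ * R = 1 / 2)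
    (u u' b b' : X)
    (hu : ‖u - u₀‖ ≤ R) (hu' : ‖u' - u₀‖ ≤ R)
    (hb : ‖b - L u₀‖ ≤ R / (2 * ‖(A.symm : X →L[ℝ] X)‖))
    (hb' : ‖b' - L u₀‖ ≤ R / (2 * ‖(A.symm : X →L[ℝ] X)‖))
    (hLu : L u = b) (hLu' : L u' = b') :
    ‖u - u'‖ ≤ 2 * ‖(A.symm : X →L[ℝ] X)‖ * ‖b - b'‖ := by
  set N := ‖(A.symm : X →L[ℝ] X)‖ with hN
  have hF' := hF (u - u₀) (u' - u₀) hu hu'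
  rw [add_sub_cancel, add_sub_cancel, hLu, hLu'] at hF'
  have key : (A : X →L[ℝ] X) (u - u') =
      (b - b') - ((b - L u₀ - A (u - u₀)) - (b' - L u₀ - A (u' - u₀))) := by
    have h1 : (A : X →L[ℝ] X) (u - u') = A (u - u₀) - A (u' - u₀) := by
      rw [← map_sub, show u - u₀ - (u' - u₀) = u - u' from by abel]; rfl
    rw [h1]; abel
  have hinv : u - u' = (A.symm : X →L[ℝ] X)
      ((b - b') - ((b - L u₀ - A (u - u₀)) - (b' - L u₀ - A (u' - u₀)))) := by
    rw [← key]
    simp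
  have hbound : ‖u - u'‖ ≤ N * (‖b - b'‖ + M * R * ‖u - u'‖) := by
    conv_lhs => rw [hinv]
    calc ‖(A.symm : X →L[ℝ] X) _‖ ≤ N * ‖(b - b') - ((b - L u₀ - A (u - u₀)) - (b' - L u₀ - A (u' - u₀)))‖ :=
          (A.symm : X →L[ℝ] X).le_opNorm _
      _ ≤ N * (‖b - b'‖ + ‖(b - L u₀ - A (u - u₀)) - (b' - L u₀ - A (u' - u₀))‖) := by
          gcongr; exact norm_sub_le _ _
      _ ≤ N * (‖b - b'‖ + M * R * ‖u - u'‖) := by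
          gcongr
          have : u - u₀ - (u' - u₀) = u - u' := by abel
          rw [this] at hF'
          exact hF'
  have hNMR : N * (M * R) = 1 / 2 := by rw [← hMR]; ring
  nlinarith [norm_nonneg (b - b'), norm_nonneg (u - u')]
end

section
/- If ρ(y,x) > 0 for a.e. pairs with |y-x| < ε and the symmetrized quadratic form (1/2)∫_Ω∫_{H_ε(x)∩Ω} ρ(y,x)|(w(y)-w(x))·e_{y-x}|² dy dx equals zero for a continuous field w on a connected open bounded Ω, then w is a rigid motion: w(x) = Qx + c with Q skew-symmetric. -/
open MeasureTheory
open scoped RealInnerProductSpace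

open Metric Set Filter Topology

/-! The energy density is nonnegative, so its vanishing integral over the open set
`S = {(x, y) ∈ Ω × Ω | ‖y - x‖ < ε}` makes it vanish a.e. on `S`; as `ρ > 0` off the diagonal and
`(x, y) ↦ ⟪w y - w x, y - x⟫` is continuous on `S`, this inner product vanishes on all of `S`.
Polarizing that identity on a small ball around any point shows that `w` agrees there with an
affine map `x ↦ Q x + c`, `Q` skew. Thus `w` is analytic on `Ω`, and the identity theorem on the
connected set `Ω` extends one local affine representation to all of `Ω`. -/

theorem setIntegral_setOf_mem_mem_eq_integral_integral {α β G : Type*} [MeasurableSpace α]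
    [MeasurableSpace β] [NormedAddCommGroup G] [NormedSpace ℝ G] {μ : Measure α} {ν : Measure β}
    [SFinite μ] [SFinite ν] {A : Set α} {B : α → Set β} (hA : MeasurableSet A)
    (hB : ∀ x, MeasurableSet (B x)) (hS : MeasurableSet {p : α × β | p.1 ∈ A ∧ p.2 ∈ B p.1})
    {f : α × β → G} (hf : IntegrableOn f {p | p.1 ∈ A ∧ p.2 ∈ B p.1} (μ.prod ν)) :
    ∫ p in {p | p.1 ∈ A ∧ p.2 ∈ B p.1}, f p ∂μ.prod ν = ∫ x in A, ∫ y in B x, f (x, y) ∂ν ∂μ := by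
  rw [← integral_indicator hS, integral_prod _ (hf.integrable_indicator hS),
    ← integral_indicator hA]
  congr 1 with x
  by_cases hx : x ∈ A
  · rw [indicator_of_mem hx, ← integral_indicator (hB x)]
    congr 1 with y
    by_cases hy : y ∈ B x <;> simp [indicator, hx, hy]
  · simp [indicator, hx]

section InnerProductSpace

variable {E : Type*} [NormedAddCommGroup E] [InnerProductSpace ℝ E]

theorem inner_eq_neg_inner_of_inner_sub_sub_eq_zero {a b p q : E} (h : ⟪b - a, q - p⟫ = 0)
    (ha : ⟪a, p⟫ = 0) (hb : ⟪b, q⟫ = 0) : ⟪b, p⟫ = -⟪a, q⟫ := by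
  simp only [inner_sub_left, inner_sub_right] at h
  linarith

theorem LinearMap.inner_map_eq_neg_inner_map_of_forall_mem_ball {Q : E →ₗ[ℝ] E} {r : ℝ} (hr : 0 < r)
    (h : ∀ a ∈ ball (0 : E) r, ∀ b ∈ ball (0 : E) r, ⟪Q b, a⟫ = -⟪Q a, b⟫) (u v : E) :
    ⟪Q u, v⟫ = -⟪u, Q v⟫ := by
  have hsmall : ∀ x : E, ∀ᶠ s in 𝓝[≠] (0 : ℝ), s • x ∈ ball (0 : E) r := fun x =>
    nhdsWithin_le_nhds <| (tendsto_id.smul_const x).eventually_mem <| by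
      simpa using ball_mem_nhds (0 : E) hr
  obtain ⟨s, ⟨hu, hv⟩, hs⟩ :=
    ((hsmall u).and (hsmall v)).and self_mem_nhdsWithin |>.exists
  have hs2 : s * s ≠ 0 := mul_ne_zero hs hs
  have := h _ hu _ hv
  simp only [map_smul, real_inner_smul_left, real_inner_smul_right] at this
  rw [real_inner_comm (Q v) u]
  exact mul_left_cancel₀ hs2 (by linarith)

theorem exists_linearMap_eqOn_ball_of_inner_antisymm [FiniteDimensional ℝ E] {v : E → E} {r : ℝ}
    (hr : 0 < r) (h : ∀ a ∈ ball (0 : E) r, ∀ b ∈ ball (0 : E) r, ⟪v b, a⟫ = -⟪v a, b⟫) :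
    ∃ Q : E →ₗ[ℝ] E, EqOn v Q (ball 0 r) := by
  let e := stdOrthonormalBasis ℝ E
  set t := r / 2
  have ht : t ≠ 0 := by positivity
  have he : ∀ i, t • e i ∈ ball (0 : E) r := fun i => by
    rw [mem_ball_zero_iff, norm_smul, e.orthonormal.1 i, mul_one,
      Real.norm_of_nonneg (by positivity)]
    exact half_lt_self hr
  -- `⟪v a, t • e i⟫ = -⟪v (t • e i), a⟫` exhibits each coordinate of `v a` as a linear form in `a`.
  refine ⟨∑ i, (innerₗ E (-t⁻¹ • v (t • e i))).smulRight (e i), fun a ha => ?_⟩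
  rw [← e.sum_repr' (v a), LinearMap.sum_apply]
  refine Finset.sum_congr rfl fun i _ => ?_
  rw [LinearMap.smulRight_apply, innerₗ_apply_apply, real_inner_smul_left, h _ ha _ (he i),
    real_inner_comm, real_inner_smul_right]
  field_simp

theorem exists_skew_eqOn_ball_of_inner_sub_eq_zero [FiniteDimensional ℝ E] {w : E → E} {z : E}
    {r : ℝ} (hr : 0 < r) (h : ∀ x ∈ ball z r, ∀ y ∈ ball z r, ⟪w y - w x, y - x⟫ = 0) :
    ∃ Q : E →ₗ[ℝ] E, (∀ u v, ⟪Q u, v⟫ = -⟪u, Q v⟫) ∧ ∀ x ∈ ball z r, w x = Q (x - z) + w z := by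
  have hball : ∀ a ∈ ball (0 : E) r, z + a ∈ ball z r := fun a ha => by
    simpa using ha
  have hanti : ∀ a ∈ ball (0 : E) r, ∀ b ∈ ball (0 : E) r,
      ⟪w (z + b) - w z, a⟫ = -⟪w (z + a) - w z, b⟫ := fun a ha b hb => by
    have hz : z ∈ ball z r := mem_ball_self hr
    simpa using inner_eq_neg_inner_of_inner_sub_sub_eq_zero
      (by simpa using h _ (hball a ha) _ (hball b hb)) (by simpa using h _ hz _ (hball a ha))
      (by simpa using h _ hz _ (hball b hb))
  obtain ⟨Q, hQ⟩ := exists_linearMap_eqOn_ball_of_inner_antisymm hr hanti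
  refine ⟨Q, Q.inner_map_eq_neg_inner_map_of_forall_mem_ball hr fun a ha b hb => ?_, fun x hx => ?_⟩
  · rw [← hQ ha, ← hQ hb, hanti a ha b hb]
  · have hx' : x - z ∈ ball (0 : E) r := by simpa [dist_eq_norm] using hx
    rw [← hQ hx']
    simp

theorem exists_skew_eventuallyEq_of_inner_sub_eq_zero [FiniteDimensional ℝ E] {Ω : Set E}
    (hΩ : IsOpen Ω) {ε : ℝ} (hε : 0 < ε) {w : E → E}
    (h : ∀ x ∈ Ω, ∀ y ∈ Ω, dist y x < ε → ⟪w y - w x, y - x⟫ = 0) {z : E} (hz : z ∈ Ω) :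
    ∃ Q : E →ₗ[ℝ] E, (∀ u v, ⟪Q u, v⟫ = -⟪u, Q v⟫) ∧ ∃ c, w =ᶠ[𝓝 z] fun x => Q x + c := by
  obtain ⟨r₀, hr₀, hr₀Ω⟩ := isOpen_iff.mp hΩ z hz
  set r := min r₀ (ε / 2)
  have hr : 0 < r := lt_min hr₀ (half_pos hε)
  have hrΩ : ball z r ⊆ Ω := (ball_subset_ball (min_le_left _ _)).trans hr₀Ω
  obtain ⟨Q, hQ, hwQ⟩ := exists_skew_eqOn_ball_of_inner_sub_eq_zero hr fun x hx y hy =>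
    h x (hrΩ hx) y (hrΩ hy) <| calc
      dist y x ≤ dist y z + dist x z := dist_triangle_right y x z
      _ < r + r := add_lt_add hy hx
      _ ≤ ε / 2 + ε / 2 := by gcongr <;> exact min_le_right _ _
      _ = ε := add_halves ε
  refine ⟨Q, hQ, w z - Q z, ?_⟩
  filter_upwards [ball_mem_nhds z hr] with x hx
  rw [hwQ x hx, map_sub]
  abel

theorem analyticAt_linearMap_add_const [FiniteDimensional ℝ E] (Q : E →ₗ[ℝ] E) (c x : E) :
    AnalyticAt ℝ (fun y => Q y + c) x :=
  (LinearMap.toContinuousLinearMap Q).analyticAt x |>.add analyticAt_const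

end InnerProductSpace

theorem inner_unitVec {d : ℕ} (u y x : EuclideanSpace ℝ (Fin d)) :
    ⟪u, unitVec y x⟫ = ‖y - x‖⁻¹ * ⟪u, y - x⟫ :=
  real_inner_smul_right _ _ _

theorem inner_sub_eq_zero_of_energy_eq_zero {d : ℕ} {ε : ℝ} {Ω : Set (EuclideanSpace ℝ (Fin d))}
    (hΩo : IsOpen Ω) {ρ : EuclideanSpace ℝ (Fin d) → EuclideanSpace ℝ (Fin d) → ℝ}
    (hρpos : ∀ x y : EuclideanSpace ℝ (Fin d), 0 < ‖y - x‖ → ‖y - x‖ < ε → 0 < ρ y x)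
    {w : EuclideanSpace ℝ (Fin d) → EuclideanSpace ℝ (Fin d)} (hw : ContinuousOn w Ω)
    (hint : IntegrableOn
      (fun p : EuclideanSpace ℝ (Fin d) × EuclideanSpace ℝ (Fin d) =>
        ρ p.2 p.1 * ⟪w p.2 - w p.1, unitVec p.2 p.1⟫ ^ 2)
      {p : EuclideanSpace ℝ (Fin d) × EuclideanSpace ℝ (Fin d) |
        p.1 ∈ Ω ∧ p.2 ∈ ball p.1 ε ∩ Ω})
    (hzero : ∫ x in Ω, ∫ y in ball x ε ∩ Ω, ρ y x * ⟪w y - w x, unitVec y x⟫ ^ 2 = 0)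
    (x : EuclideanSpace ℝ (Fin d)) (hx : x ∈ Ω) (y : EuclideanSpace ℝ (Fin d)) (hy : y ∈ Ω)
    (hxy : dist y x < ε) :
    ⟪w y - w x, y - x⟫ = 0 := by
  set S := {p : EuclideanSpace ℝ (Fin d) × EuclideanSpace ℝ (Fin d) |
    p.1 ∈ Ω ∧ p.2 ∈ ball p.1 ε ∩ Ω}
  set g := fun p : EuclideanSpace ℝ (Fin d) × EuclideanSpace ℝ (Fin d) =>
    ρ p.2 p.1 * ⟪w p.2 - w p.1, unitVec p.2 p.1⟫ ^ 2
  have hSo : IsOpen S := (hΩo.preimage continuous_fst).inter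
    ((isOpen_lt (continuous_snd.dist continuous_fst) continuous_const).inter
      (hΩo.preimage continuous_snd))
  have hρ : ∀ p ∈ S, p.2 ≠ p.1 → 0 < ρ p.2 p.1 := fun p hp hne =>
    hρpos _ _ (norm_pos_iff.mpr (sub_ne_zero.mpr hne)) (by simpa [dist_eq_norm] using hp.2.1)
  have hg_nonneg : ∀ p ∈ S, 0 ≤ g p := fun p hp => by
    by_cases hne : p.2 = p.1
    · simp [g, hne]
    · exact mul_nonneg (hρ p hp hne).le (sq_nonneg _)
  have hg_int : ∫ p in S, g p = 0 := by
    rw [Measure.volume_eq_prod]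
    exact (setIntegral_setOf_mem_mem_eq_integral_integral (B := fun x => ball x ε ∩ Ω)
      hΩo.measurableSet (fun x => (isOpen_ball.inter hΩo).measurableSet) hSo.measurableSet
      hint).trans hzero
  have hg_ae : g =ᵐ[volume.restrict S] 0 :=
    (setIntegral_eq_zero_iff_of_nonneg_ae
      ((ae_restrict_mem hSo.measurableSet).mono hg_nonneg) hint).mp hg_int
  have horth_ae : (fun p : EuclideanSpace ℝ (Fin d) × EuclideanSpace ℝ (Fin d) =>
      ⟪w p.2 - w p.1, p.2 - p.1⟫) =ᵐ[volume.restrict S] 0 := by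
    filter_upwards [hg_ae, ae_restrict_mem hSo.measurableSet] with p hgp hp
    by_cases hne : p.2 = p.1
    · simp [hne]
    · have hnorm : ‖p.2 - p.1‖⁻¹ ≠ 0 := inv_ne_zero (norm_ne_zero_iff.mpr (sub_ne_zero.mpr hne))
      simpa [g, (hρ p hp hne).ne', inner_unitVec, hnorm] using hgp
  have hcont : ContinuousOn (fun p : EuclideanSpace ℝ (Fin d) × EuclideanSpace ℝ (Fin d) =>
      ⟪w p.2 - w p.1, p.2 - p.1⟫) S :=
    ((hw.comp continuous_snd.continuousOn fun p hp => hp.2.2).sub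
      (hw.comp continuous_fst.continuousOn fun p hp => hp.1)).inner
      (continuous_snd.sub continuous_fst).continuousOn
  exact Measure.eqOn_open_of_ae_eq horth_ae hSo hcont continuous_zero.continuousOn
    (show (x, y) ∈ S from ⟨hx, hxy, hy⟩)

theorem stmt_13_general (d : ℕ) (ε : ℝ) (hε : 0 < ε)
    (Ω : Set (EuclideanSpace ℝ (Fin d))) (hΩo : IsOpen Ω) (hΩc : IsConnected Ω)
    (ρ : EuclideanSpace ℝ (Fin d) → EuclideanSpace ℝ (Fin d) → ℝ)
    (hρpos : ∀ x y : EuclideanSpace ℝ (Fin d), 0 < ‖y - x‖ → ‖y - x‖ < ε → 0 < ρ y x)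
    (w : EuclideanSpace ℝ (Fin d) → EuclideanSpace ℝ (Fin d))
    (hw : ContinuousOn w Ω)
    (hint : IntegrableOn
      (fun p : EuclideanSpace ℝ (Fin d) × EuclideanSpace ℝ (Fin d) =>
        ρ p.2 p.1 * ⟪w p.2 - w p.1, unitVec p.2 p.1⟫ ^ 2)
      {p : EuclideanSpace ℝ (Fin d) × EuclideanSpace ℝ (Fin d) |
        p.1 ∈ Ω ∧ p.2 ∈ Metric.ball p.1 ε ∩ Ω})
    (hzero : (1 / 2) * ∫ x in Ω, ∫ y in Metric.ball x ε ∩ Ω,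
        ρ y x * ⟪w y - w x, unitVec y x⟫ ^ 2 = 0) :
    ∃ (Q : EuclideanSpace ℝ (Fin d) →ₗ[ℝ] EuclideanSpace ℝ (Fin d))
      (c : EuclideanSpace ℝ (Fin d)),
      (∀ v u : EuclideanSpace ℝ (Fin d), ⟪Q v, u⟫ = -⟪v, Q u⟫) ∧
      ∀ x ∈ Ω, w x = Q x + c := by
  have horth := inner_sub_eq_zero_of_energy_eq_zero hΩo hρpos hw hint (by linarith)
  have hloc := fun z (hz : z ∈ Ω) => exists_skew_eventuallyEq_of_inner_sub_eq_zero hΩo hε horth hz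
  have hw_an : AnalyticOnNhd ℝ w Ω := fun z hz => by
    obtain ⟨Q, -, c, hwQ⟩ := hloc z hz
    exact (analyticAt_linearMap_add_const Q c z).congr hwQ.symm
  obtain ⟨z₀, hz₀⟩ := hΩc.nonempty
  obtain ⟨Q, hQ, c, hwQ⟩ := hloc z₀ hz₀
  exact ⟨Q, c, hQ, hw_an.eqOn_of_preconnected_of_eventuallyEq
    (fun x _ => analyticAt_linearMap_add_const Q c x) hΩc.isPreconnected hz₀ hwQ⟩

theorem stmt_13 (d : ℕ) (hd : d = 2 ∨ d = 3) (ε : ℝ) (hε : 0 < ε)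
    (Ω : Set (EuclideanSpace ℝ (Fin d))) (hΩo : IsOpen Ω) (hΩc : IsConnected Ω)
    (hΩb : Bornology.IsBounded Ω)
    (ρ : EuclideanSpace ℝ (Fin d) → EuclideanSpace ℝ (Fin d) → ℝ)
    (hρsym : ∀ x y, ρ y x = ρ x y)
    (hρpos : ∀ x y : EuclideanSpace ℝ (Fin d), 0 < ‖y - x‖ → ‖y - x‖ < ε → 0 < ρ y x)
    (w : EuclideanSpace ℝ (Fin d) → EuclideanSpace ℝ (Fin d))
    (hw : ContinuousOn w Ω)
    (hint : IntegrableOn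
      (fun p : EuclideanSpace ℝ (Fin d) × EuclideanSpace ℝ (Fin d) =>
        ρ p.2 p.1 * ⟪w p.2 - w p.1, unitVec p.2 p.1⟫ ^ 2)
      {p : EuclideanSpace ℝ (Fin d) × EuclideanSpace ℝ (Fin d) |
        p.1 ∈ Ω ∧ p.2 ∈ Metric.ball p.1 ε ∩ Ω})
    (hzero : (1 / 2) * ∫ x in Ω, ∫ y in Metric.ball x ε ∩ Ω,
        ρ y x * ⟪w y - w x, unitVec y x⟫ ^ 2 = 0) :
    ∃ (Q : EuclideanSpace ℝ (Fin d) →ₗ[ℝ] EuclideanSpace ℝ (Fin d))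
      (c : EuclideanSpace ℝ (Fin d)),
      (∀ v u : EuclideanSpace ℝ (Fin d), ⟪Q v, u⟫ = -⟪v, Q u⟫) ∧
      ∀ x ∈ Ω, w x = Q x + c :=
  stmt_13_general d ε hε Ω hΩo hΩc ρ hρpos w hw hint hzero
end

section
/- The operator with kernel ρ(y,x) e_{y-x} ⊗ e_{y-x}, where |ρ(y,x)| ≤ C·χ_{|y-x|<ε}/|y-x|, is bounded on L²(Ω;ℝ^d): the operator w ↦ ∫_Ω ρ(y,x)((w(y)-w(x))·e_{y-x}) e_{y-x} dy satisfies ‖Dw‖_{L²} ≤ (C'/ε²)‖w‖_{L²} with C' independent of ε. -/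
/-! Since `|⟪v, e⟫ e| ≤ |v|` for a unit vector `e`, the integrand is bounded by
`k (y - x) * (|w y| + |w x|)`, where `k z = c / |z|` on the `ε`-ball, `c = C / (ε ^ (d + 1) ω_d)`.
Polar coordinates give `∫ k = c d ω_d ε ^ (d - 1) / (d - 1) ≤ 2 C / ε²`; this is where `d ≥ 2`
enters. The part with `|w y|` is bounded in `L²` by `(∫ k) ‖w‖` by the Schur test for the
symmetric kernel `k (y - x)`, and the part with `|w x|` is `(∫ k) |w x|` pointwise, so
`‖D w‖ ≤ 4 C / ε² ‖w‖`. -/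

open MeasureTheory
open scoped RealInnerProductSpace

open Metric Set Module Function
open scoped ENNReal

section Schur

variable {α : Type*} [MeasurableSpace α] {μ : Measure α}

theorem lintegral_mul_sq_le {K g : α → ℝ≥0∞} (hK : AEMeasurable K μ) (hg : AEMeasurable g μ) :
    (∫⁻ a, K a * g a ∂μ) ^ 2 ≤ (∫⁻ a, K a ∂μ) * ∫⁻ a, K a * g a ^ 2 ∂μ := by
  have hsq (x : ℝ≥0∞) : (x ^ (2⁻¹ : ℝ)) ^ 2 = x := by
    simpa using ENNReal.rpow_inv_natCast_pow two_ne_zero x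
  have hsq' (x : ℝ≥0∞) : (x ^ 2) ^ (2⁻¹ : ℝ) = x := by
    simpa using ENNReal.pow_rpow_inv_natCast two_ne_zero x
  have hsqrt (a : α) : K a ^ (2⁻¹ : ℝ) * (K a * g a ^ 2) ^ (2⁻¹ : ℝ) = K a * g a := by
    rw [ENNReal.mul_rpow_of_nonneg _ _ (by norm_num), hsq', ← mul_assoc, ← sq, hsq]
  have hHolder := ENNReal.lintegral_mul_norm_pow_le (g := fun a ↦ K a * g a ^ 2) hK
    (hK.mul (hg.pow_const 2)) (p := 2⁻¹) (q := 2⁻¹) (by norm_num) (by norm_num) (by norm_num)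
  simp only [hsqrt] at hHolder
  calc (∫⁻ a, K a * g a ∂μ) ^ 2
      ≤ ((∫⁻ a, K a ∂μ) ^ (2⁻¹ : ℝ) * (∫⁻ a, K a * g a ^ 2 ∂μ) ^ (2⁻¹ : ℝ)) ^ 2 := by
        gcongr
    _ = (∫⁻ a, K a ∂μ) * ∫⁻ a, K a * g a ^ 2 ∂μ := by rw [mul_pow, hsq, hsq]

theorem eLpNorm_two_le_of_lintegral_sq_le {f g : α → ℝ≥0∞} {c : ℝ≥0∞}
    (h : ∫⁻ x, f x ^ 2 ∂μ ≤ c ^ 2 * ∫⁻ x, g x ^ 2 ∂μ) :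
    eLpNorm f 2 μ ≤ c * eLpNorm g 2 μ := by
  have hpow (u : α → ℝ≥0∞) : eLpNorm u 2 μ ^ (2 : ℝ) = ∫⁻ x, u x ^ 2 ∂μ := by
    simpa using eLpNorm_nnreal_pow_eq_lintegral (μ := μ) (f := u) (p := 2) two_ne_zero
  rwa [← ENNReal.rpow_le_rpow_iff two_pos, ENNReal.mul_rpow_of_nonneg _ _ zero_le_two, hpow,
    hpow, ENNReal.rpow_two]

variable [SFinite μ] {K : α → α → ℝ≥0∞} {g : α → ℝ≥0∞} {m : ℝ≥0∞}

theorem lintegral_sq_lintegral_mul_le (hK : Measurable (uncurry K)) (hg : AEMeasurable g μ)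
    (hrow : ∀ x, ∫⁻ y, K x y ∂μ ≤ m) (hcol : ∀ y, ∫⁻ x, K x y ∂μ ≤ m) :
    ∫⁻ x, (∫⁻ y, K x y * g y ∂μ) ^ 2 ∂μ ≤ m ^ 2 * ∫⁻ y, g y ^ 2 ∂μ := by
  have hKg : AEMeasurable (uncurry fun x y ↦ K x y * g y ^ 2) (μ.prod μ) :=
    hK.aemeasurable.mul (hg.pow_const 2).comp_snd
  calc ∫⁻ x, (∫⁻ y, K x y * g y ∂μ) ^ 2 ∂μ
      ≤ ∫⁻ x, m * ∫⁻ y, K x y * g y ^ 2 ∂μ ∂μ := by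
        refine lintegral_mono fun x ↦ ?_
        grw [lintegral_mul_sq_le hK.of_uncurry_left.aemeasurable hg, hrow x]
    _ = m * ∫⁻ y, (∫⁻ x, K x y ∂μ) * g y ^ 2 ∂μ := by
        rw [lintegral_const_mul'' _ hKg.lintegral_prod_right, lintegral_lintegral_swap hKg]
        congr 1
        exact lintegral_congr fun y ↦ lintegral_mul_const _ hK.of_uncurry_right
    _ ≤ m ^ 2 * ∫⁻ y, g y ^ 2 ∂μ := by
        grw [hcol]
        rw [lintegral_const_mul'' _ (hg.pow_const 2), ← mul_assoc, sq]

theorem eLpNorm_lintegral_mul_add_le (hK : Measurable (uncurry K)) (hg : AEMeasurable g μ)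
    (hrow : ∀ x, ∫⁻ y, K x y ∂μ ≤ m) (hcol : ∀ y, ∫⁻ x, K x y ∂μ ≤ m) :
    eLpNorm (fun x ↦ ∫⁻ y, K x y * (g y + g x) ∂μ) 2 μ ≤ 2 * m * eLpNorm g 2 μ := by
  set T := fun x ↦ ∫⁻ y, K x y * g y ∂μ
  have hT : AEMeasurable T μ := (hK.aemeasurable.mul hg.comp_snd).lintegral_prod_right
  have hsplit (x : α) : ∫⁻ y, K x y * (g y + g x) ∂μ ≤ T x + m * g x := by
    simp only [mul_add]
    rw [lintegral_add_left' (f := fun y ↦ K x y * g y)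
        (hK.of_uncurry_left.aemeasurable.mul hg), lintegral_mul_const _ hK.of_uncurry_left]
    grw [hrow x]
  refine eLpNorm_two_le_of_lintegral_sq_le ?_
  calc ∫⁻ x, (∫⁻ y, K x y * (g y + g x) ∂μ) ^ 2 ∂μ
      ≤ ∫⁻ x, 2 * (T x ^ 2 + (m * g x) ^ 2) ∂μ := by
        refine lintegral_mono fun x ↦ ?_
        grw [hsplit x]
        have := ENNReal.rpow_add_le_mul_rpow_add_rpow (T x) (m * g x) one_le_two
        norm_num [ENNReal.rpow_two] at this
        exact this
    _ = 2 * (∫⁻ x, T x ^ 2 ∂μ + m ^ 2 * ∫⁻ x, g x ^ 2 ∂μ) := by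
        simp only [mul_pow]
        rw [lintegral_const_mul' _ _ ENNReal.ofNat_ne_top, lintegral_add_left' (hT.pow_const 2),
          lintegral_const_mul'' _ (hg.pow_const 2)]
    _ ≤ (2 * m) ^ 2 * ∫⁻ x, g x ^ 2 ∂μ := by
        grw [lintegral_sq_lintegral_mul_le hK hg hrow hcol]
        exact le_of_eq (by ring)

end Schur

section RealNorm

variable {α F : Type*} [MeasurableSpace α] {μ : Measure α} [NormedAddCommGroup F]

theorem toReal_eLpNorm_two_of_integrable {f : α → F}
    (hf : Integrable (fun x ↦ ‖f x‖ ^ 2) μ) :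
    (eLpNorm f 2 μ).toReal = (∫ x, ‖f x‖ ^ 2 ∂μ) ^ (1 / 2 : ℝ) := by
  rw [integral_eq_lintegral_of_nonneg_ae (.of_forall fun x ↦ by positivity) hf.1,
    eLpNorm_eq_lintegral_rpow_enorm_toReal two_ne_zero ENNReal.ofNat_ne_top,
    ← ENNReal.toReal_rpow]
  simp [ENNReal.ofReal_pow]

theorem rpow_half_integral_norm_sq_le (f : α → F) :
    (∫ x, ‖f x‖ ^ 2 ∂μ) ^ (1 / 2 : ℝ) ≤ (eLpNorm f 2 μ).toReal := by
  by_cases hf : Integrable (fun x ↦ ‖f x‖ ^ 2) μ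
  · exact (toReal_eLpNorm_two_of_integrable hf).ge
  · simp [integral_undef hf]

theorem MeasureTheory.MemLp.toReal_eLpNorm_two {f : α → F} (hf : MemLp f 2 μ) :
    (eLpNorm f 2 μ).toReal = (∫ x, ‖f x‖ ^ 2 ∂μ) ^ (1 / 2 : ℝ) :=
  toReal_eLpNorm_two_of_integrable (hf.integrable_norm_pow two_ne_zero)

end RealNorm

section Radial

variable {E : Type*} [NormedAddCommGroup E] [NormedSpace ℝ E] [FiniteDimensional ℝ E]
  [MeasurableSpace E] [BorelSpace E] (μ : Measure E) [μ.IsAddHaarMeasure]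

theorem integral_ball_inv_norm (hE : 1 < finrank ℝ E) {r : ℝ} (hr : 0 ≤ r) :
    ∫ x in ball (0 : E) r, ‖x‖⁻¹ ∂μ =
      finrank ℝ E / (finrank ℝ E - 1) * μ.real (ball 0 1) * r ^ (finrank ℝ E - 1) := by
  have : Nontrivial E := nontrivial_of_finrank_pos (R := ℝ) (by omega)
  obtain ⟨n, hn⟩ : ∃ n, finrank ℝ E = n + 2 := ⟨finrank ℝ E - 2, by omega⟩
  have hball :
      ∫ x in ball (0 : E) r, ‖x‖⁻¹ ∂μ = ∫ x, (Iio r).indicator (·⁻¹) ‖x‖ ∂μ := by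
    rw [← integral_indicator measurableSet_ball]
    congr 1 with x
    by_cases hx : ‖x‖ < r <;> simp [indicator, hx]
  have hradial : ∫ y in Ioi (0 : ℝ), y ^ (n + 1) • (Iio r).indicator (·⁻¹) y =
      ∫ y in (0 : ℝ)..r, y ^ n := by
    have hpow : EqOn (fun y : ℝ ↦ y ^ (n + 1) • (Iio r).indicator (·⁻¹) y)
        ((Iio r).indicator (· ^ n)) (Ioi 0) := by
      intro y (hy : 0 < y)
      by_cases hyr : y < r
      · simp [hyr, pow_succ, hy.ne']
      · simp [hyr]
    rw [setIntegral_congr_fun measurableSet_Ioi hpow, integral_indicator measurableSet_Iio,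
      Measure.restrict_restrict measurableSet_Iio, Iio_inter_Ioi,
      intervalIntegral.integral_of_le hr, integral_Ioc_eq_integral_Ioo]
  rw [hball, integral_fun_norm_addHaar, hn, show n + 2 - 1 = n + 1 from rfl, hradial,
    integral_pow]
  field_simp
  push_cast
  ring

theorem integrableOn_ball_inv_norm (hE : 1 < finrank ℝ E) (r : ℝ) :
    IntegrableOn (fun x : E ↦ ‖x‖⁻¹) (ball 0 r) μ := by
  have : Nontrivial E := nontrivial_of_finrank_pos (R := ℝ) (by omega)
  obtain ⟨n, hn⟩ : ∃ n, finrank ℝ E = n + 2 := ⟨finrank ℝ E - 2, by omega⟩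
  rw [integrableOn_fun_norm_addHaar μ (f := (·⁻¹)), hn, show n + 2 - 1 = n + 1 from rfl]
  refine (integrableOn_congr_fun (fun y (hy : y ∈ Ioo 0 r) ↦ ?_) measurableSet_Ioo).mpr
    ((continuous_pow n).integrableOn_Icc.mono_set Ioo_subset_Icc_self)
  simp [pow_succ, hy.1.ne']

theorem lintegral_ball_inv_norm (hE : 1 < finrank ℝ E) {r : ℝ} (hr : 0 ≤ r) :
    ∫⁻ x in ball (0 : E) r, ENNReal.ofReal ‖x‖⁻¹ ∂μ = ENNReal.ofReal
      (finrank ℝ E / (finrank ℝ E - 1) * μ.real (ball 0 1) * r ^ (finrank ℝ E - 1)) := by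
  rw [← integral_ball_inv_norm μ hE hr, ofReal_integral_eq_lintegral_ofReal
    (integrableOn_ball_inv_norm μ hE r) (.of_forall fun x ↦ by positivity)]

end Radial

section Kernel

variable {E : Type*} [NormedAddCommGroup E]

-- At `z = 0` the real inverse is `0`, not `∞`; the integrands below vanish on the diagonal.
noncomputable def truncatedInvNorm (r : ℝ) : E → ℝ≥0∞ :=
  (ball 0 r).indicator fun z ↦ ENNReal.ofReal ‖z‖⁻¹

theorem truncatedInvNorm_neg (r : ℝ) (z : E) :
    truncatedInvNorm r (-z) = truncatedInvNorm r z := by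
  simp [truncatedInvNorm, indicator]

theorem enorm_le_mul_truncatedInvNorm {ρ : E → E → ℝ} {c r : ℝ} (hc : 0 ≤ c)
    (hρ : ∀ x y, x ≠ y → ‖y - x‖ < r → |ρ y x| ≤ c / ‖y - x‖)
    (hρ_zero : ∀ x y, r ≤ ‖y - x‖ → ρ y x = 0) {x y : E} (hxy : x ≠ y) :
    ‖ρ y x‖ₑ ≤ ENNReal.ofReal c * truncatedInvNorm r (y - x) := by
  by_cases h : ‖y - x‖ < r
  · rw [truncatedInvNorm, indicator_of_mem (mem_ball_zero_iff.2 h), ← ENNReal.ofReal_mul hc,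
      Real.enorm_eq_ofReal_abs]
    exact ENNReal.ofReal_le_ofReal ((hρ x y hxy h).trans_eq (div_eq_mul_inv _ _))
  · simp [hρ_zero x y (not_lt.1 h)]

variable [MeasurableSpace E] [BorelSpace E]

theorem measurable_truncatedInvNorm (r : ℝ) : Measurable (truncatedInvNorm (E := E) r) :=
  measurable_norm.inv.ennreal_ofReal.indicator measurableSet_ball

theorem lintegral_truncatedInvNorm_le [NormedSpace ℝ E] [FiniteDimensional ℝ E] (μ : Measure E)
    [μ.IsAddHaarMeasure] (hE : 1 < finrank ℝ E) {r : ℝ} (hr : 0 ≤ r) :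
    ∫⁻ z, truncatedInvNorm r z ∂μ ≤
      ENNReal.ofReal (2 * μ.real (ball 0 1) * r ^ (finrank ℝ E - 1)) := by
  rw [truncatedInvNorm, lintegral_indicator measurableSet_ball, lintegral_ball_inv_norm μ hE hr]
  gcongr
  have hE' : (2 : ℝ) ≤ finrank ℝ E := by exact_mod_cast (hE : 2 ≤ finrank ℝ E)
  rw [div_le_iff₀ (by linarith)]
  linarith

theorem lintegral_const_mul_truncatedInvNorm_le [NormedSpace ℝ E] [FiniteDimensional ℝ E]
    (μ : Measure E) [μ.IsAddHaarMeasure] (hE : 1 < finrank ℝ E) (C : ℝ) {r : ℝ} (hr : 0 < r) :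
    ∫⁻ z, ENNReal.ofReal (C / (r ^ (finrank ℝ E + 1) * μ.real (ball 0 1))) *
      truncatedInvNorm r z ∂μ ≤ ENNReal.ofReal (2 * C / r ^ 2) := by
  have hω : μ.real (ball (0 : E) 1) ≠ 0 :=
    (ENNReal.toReal_pos (measure_ball_pos μ 0 one_pos).ne' measure_ball_lt_top.ne).ne'
  rw [lintegral_const_mul _ (measurable_truncatedInvNorm r)]
  grw [lintegral_truncatedInvNorm_le μ hE hr.le, ← ENNReal.ofReal_mul' (by positivity)]
  refine le_of_eq (congrArg _ ?_)
  obtain ⟨n, hn⟩ : ∃ n, finrank ℝ E = n + 2 := ⟨finrank ℝ E - 2, by omega⟩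
  rw [hn, show n + 2 - 1 = n + 1 from rfl]
  field_simp
  ring

end Kernel

theorem eLpNorm_lintegral_sub_mul_add_le {G : Type*} [AddGroup G] [MeasurableSpace G]
    [MeasurableAdd G] [MeasurableSub₂ G] (μ : Measure G) [SFinite μ] [μ.IsAddRightInvariant]
    {k : G → ℝ≥0∞} (hk : Measurable k) (hk_neg : ∀ z, k (-z) = k z) (s : Set G)
    {g : G → ℝ≥0∞} (hg : AEMeasurable g (μ.restrict s)) :
    eLpNorm (fun x ↦ ∫⁻ y in s, k (y - x) * (g y + g x) ∂μ) 2 (μ.restrict s) ≤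
      2 * (∫⁻ z, k z ∂μ) * eLpNorm g 2 (μ.restrict s) := by
  have hrow (x : G) : ∫⁻ y in s, k (y - x) ∂μ ≤ ∫⁻ z, k z ∂μ :=
    (setLIntegral_le_lintegral s _).trans_eq (lintegral_sub_right_eq_self k x)
  refine eLpNorm_lintegral_mul_add_le (K := fun x y ↦ k (y - x))
    (hk.comp (measurable_snd.sub measurable_fst)) hg hrow fun y ↦ ?_
  have hsymm (x : G) : k (y - x) = k (x - y) := by rw [← neg_sub, hk_neg]
  simpa only [hsymm] using hrow y

theorem norm_unitVec_le_one {d : ℕ} (y x : EuclideanSpace ℝ (Fin d)) :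
    ‖unitVec y x‖ ≤ 1 := by
  rw [unitVec, norm_smul, norm_inv, norm_norm]
  exact inv_mul_le_one_of_le₀ le_rfl (norm_nonneg _)

theorem norm_inner_smul_le {F : Type*} [NormedAddCommGroup F] [InnerProductSpace ℝ F] (v : F)
    {e : F} (he : ‖e‖ ≤ 1) : ‖⟪v, e⟫ • e‖ ≤ ‖v‖ := by
  rw [norm_smul, Real.norm_eq_abs]
  calc |⟪v, e⟫| * ‖e‖ ≤ ‖v‖ * ‖e‖ * ‖e‖ := by gcongr; exact abs_real_inner_le_norm v e
    _ ≤ ‖v‖ * 1 * 1 := by gcongr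
    _ = ‖v‖ := by ring

theorem enorm_smul_inner_unitVec_smul_le {d : ℕ}
    {ρ : EuclideanSpace ℝ (Fin d) → EuclideanSpace ℝ (Fin d) → ℝ} {c r : ℝ} (hc : 0 ≤ c)
    (hρ : ∀ x y, x ≠ y → ‖y - x‖ < r → |ρ y x| ≤ c / ‖y - x‖)
    (hρ_zero : ∀ x y, r ≤ ‖y - x‖ → ρ y x = 0)
    (w : EuclideanSpace ℝ (Fin d) → EuclideanSpace ℝ (Fin d)) (x y : EuclideanSpace ℝ (Fin d)) :
    ‖ρ y x • (⟪w y - w x, unitVec y x⟫ • unitVec y x)‖ₑ ≤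
      ENNReal.ofReal c * truncatedInvNorm r (y - x) * (‖w y‖ₑ + ‖w x‖ₑ) := by
  rcases eq_or_ne x y with rfl | hxy
  · simp
  rw [enorm_smul]
  gcongr
  · exact enorm_le_mul_truncatedInvNorm hc hρ hρ_zero hxy
  · exact (enorm_le_iff_norm_le.2 (norm_inner_smul_le _ (norm_unitVec_le_one y x))).trans
      enorm_sub_le

theorem stmt_14 (d : ℕ) (hd : d = 2 ∨ d = 3) (C : ℝ) (hC : 0 < C) :
    -- the constant `C'` is independent of `ε`
    ∃ C' > 0, ∀ (ε : ℝ), 0 < ε →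
      ∀ (Ω : Set (EuclideanSpace ℝ (Fin d))), MeasurableSet Ω → Bornology.IsBounded Ω →
      ∀ (ρ : EuclideanSpace ℝ (Fin d) → EuclideanSpace ℝ (Fin d) → ℝ),
        Measurable (Function.uncurry ρ) →
        (∀ x y : EuclideanSpace ℝ (Fin d), x ≠ y → ‖y - x‖ < ε →
          |ρ y x| ≤ C / (ε ^ (d + 1) *
            (volume (Metric.ball (0 : EuclideanSpace ℝ (Fin d)) 1)).toReal * ‖y - x‖)) →
        (∀ x y : EuclideanSpace ℝ (Fin d), ε ≤ ‖y - x‖ → ρ y x = 0) →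
        ∀ w : EuclideanSpace ℝ (Fin d) → EuclideanSpace ℝ (Fin d),
          MemLp w 2 (volume.restrict Ω) →
          (∫ x in Ω, ‖∫ y in Ω,
              ρ y x • (⟪w y - w x, unitVec y x⟫ • unitVec y x)‖ ^ 2) ^ ((1 : ℝ) / 2) ≤
            C' / ε ^ 2 * (∫ x in Ω, ‖w x‖ ^ 2) ^ ((1 : ℝ) / 2) := by
  have hdim : 1 < finrank ℝ (EuclideanSpace ℝ (Fin d)) := by simp; omega
  refine ⟨4 * C, by positivity, fun ε hε Ω _ _ ρ _ hρ hρ_zero w hw ↦ ?_⟩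
  set c := C / (ε ^ (d + 1) * (volume (ball (0 : EuclideanSpace ℝ (Fin d)) 1)).toReal)
  set k : EuclideanSpace ℝ (Fin d) → ℝ≥0∞ := fun z ↦ ENNReal.ofReal c * truncatedInvNorm ε z
  have hk : ∫⁻ z, k z ≤ ENNReal.ofReal (2 * C / ε ^ 2) := by
    have := lintegral_const_mul_truncatedInvNorm_le volume hdim C hε
    rwa [finrank_euclideanSpace_fin] at this
  have hpt (x y) := enorm_smul_inner_unitVec_smul_le (c := c) (by positivity)
    (by simpa only [c, div_div] using hρ) hρ_zero w x y
  calc (∫ x in Ω, ‖∫ y in Ω,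
          ρ y x • (⟪w y - w x, unitVec y x⟫ • unitVec y x)‖ ^ 2) ^ ((1 : ℝ) / 2)
      ≤ (eLpNorm (fun x ↦ ∫ y in Ω, ρ y x • (⟪w y - w x, unitVec y x⟫ • unitVec y x)) 2
          (volume.restrict Ω)).toReal := rpow_half_integral_norm_sq_le _
    _ ≤ (2 * ENNReal.ofReal (2 * C / ε ^ 2) * eLpNorm w 2 (volume.restrict Ω)).toReal := by
      refine ENNReal.toReal_mono (ENNReal.mul_ne_top (by finiteness) hw.eLpNorm_ne_top) ?_
      calc _ ≤ eLpNorm (fun x ↦ ∫⁻ y in Ω, k (y - x) * (‖w y‖ₑ + ‖w x‖ₑ)) 2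
            (volume.restrict Ω) :=
            eLpNorm_mono_enorm fun x ↦
              (enorm_integral_le_lintegral_enorm _).trans (lintegral_mono (hpt x))
        _ ≤ 2 * (∫⁻ z, k z) * eLpNorm (‖w ·‖ₑ) 2 (volume.restrict Ω) :=
            eLpNorm_lintegral_sub_mul_add_le volume
              (measurable_const.mul (measurable_truncatedInvNorm ε))
              (fun z ↦ congrArg (ENNReal.ofReal c * ·) (truncatedInvNorm_neg ε z)) Ω
              hw.aestronglyMeasurable.enorm
        _ ≤ _ := by rw [eLpNorm_enorm]; grw [hk]
    _ = 4 * C / ε ^ 2 * (∫ x in Ω, ‖w x‖ ^ 2) ^ ((1 : ℝ) / 2) := by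
      rw [ENNReal.toReal_mul, ENNReal.toReal_mul, hw.toReal_eLpNorm_two,
        ENNReal.toReal_ofReal (by positivity), ENNReal.toReal_ofNat]
      ring
end
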